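/- Let a, T, X, Ỹ ∈ ℂ with a ≠ 0, a ≠ 1, a + (1−a)T ≠ 0 and X ≠ 0. Set a' = 1 − 1/a and μ = 1 − a' = 1/a, and define t = a/(a + (1−a)T), x = −a(1−X)/((a + (1−a)T)·X), and y = −(1−a)a²·Ỹ/((a + (1−a)T)³·X²). Then y² = x(x−1)(x−t)·t(t−1)(t−a) holds if and only if μ·Ỹ² = X(1−X)·T(1−T)·(1 − a'TX). (This is the birational equivalence used to identify the Picard–Fuchs operator of the one-parameter twisted Legendre pencil of Picard rank 19 with the hypergeometric operator of ₃F₂(1/2,1/2,1/2;1,1 | 1 − 1/a).) -/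

import Mathlib

/-! Substituting `t, x, y` into the twisted Legendre equation and clearing the denominator
`(a + (1 - a) T)⁶ X⁴` turns `y² - x(x-1)(x-t)t(t-1)(t-a)` into `(1 - a)² a⁵` times
`Ỹ²/a - X(1-X)T(1-T)(1 - (1 - 1/a)TX)`; for `a ≠ 0, 1` this factor is a unit. -/

theorem twistedLegendre_sub_eq_mul_sub {K : Type*} [Field K] {a T X Y t x y : K}
    (ha : a ≠ 0) (hden : a + (1 - a) * T ≠ 0) (hX : X ≠ 0)
    (ht : t = a / (a + (1 - a) * T))
    (hx : x = -(a * (1 - X)) / ((a + (1 - a) * T) * X))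
    (hy : y = -((1 - a) * a ^ 2 * Y) / ((a + (1 - a) * T) ^ 3 * X ^ 2)) :
    y ^ 2 - x * (x - 1) * (x - t) * t * (t - 1) * (t - a) =
      (1 - a) ^ 2 * a ^ 5 / ((a + (1 - a) * T) ^ 6 * X ^ 4) *
        (1 / a * Y ^ 2 - X * (1 - X) * T * (1 - T) * (1 - (1 - 1 / a) * T * X)) := by
  subst ht hx hy
  field_simp
  ring

/-- The birational equivalence identifying the Picard–Fuchs operator of the
one-parameter twisted Legendre pencil `y² = x(x-1)(x-t)·t(t-1)(t-a)` (Picard rank 19)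
with the hypergeometric operator of `₃F₂(1/2,1/2,1/2;1,1 | 1 - 1/a)`. -/
theorem rank19_twisted_legendre_iff_3F2
    (a T X Yt : ℂ)
    (ha : a ≠ 0) (ha1 : a ≠ 1)
    (hden : a + (1 - a)*T ≠ 0) (hX : X ≠ 0)
    (a' μ t x y : ℂ)
    (ha' : a' = 1 - 1/a) (hμ : μ = 1 - a')
    (ht : t = a / (a + (1 - a)*T))
    (hx : x = -(a*(1 - X)) / ((a + (1 - a)*T) * X))
    (hy : y = -((1 - a)*a^2*Yt) / ((a + (1 - a)*T)^3 * X^2)) :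
    y^2 = x*(x - 1)*(x - t)*t*(t - 1)*(t - a) ↔
      μ * Yt^2 = X*(1 - X)*T*(1 - T)*(1 - a'*T*X) := by
  have hfactor : (1 - a) ^ 2 * a ^ 5 / ((a + (1 - a) * T) ^ 6 * X ^ 4) ≠ 0 :=
    div_ne_zero (mul_ne_zero (pow_ne_zero _ (sub_ne_zero.2 ha1.symm)) (pow_ne_zero _ ha))
      (mul_ne_zero (pow_ne_zero _ hden) (pow_ne_zero _ hX))
  subst hμ ha'
  rw [← sub_eq_zero, twistedLegendre_sub_eq_mul_sub ha hden hX ht hx hy, mul_eq_zero,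
    or_iff_right hfactor, sub_sub_cancel, sub_eq_zero]
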